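/- arXiv:2002.02108 — 5 statements merged into one kernel-verified Lean document; each statement's English description precedes it below -/
import Mathlib

section
/- Let G be a groupoid and Y a semigroup. The set of Y-valued partial functions on G whose domains are bisections forms a semigroup under the product (ab)(gh) = a(g)b(h) for composable g ∈ dom(a), h ∈ dom(b); in particular the product ab is a well-defined partial function with dom(ab) = dom(a)·dom(b), and dom(a)·dom(b) is again a bisection. -/
/-- A groupoid modelled as a set with a partially defined (Option-valued)
multiplication and an involution. -/
structure Gpd (G : Type*) where
  mul : G → G → Option G
  inv : G → G
  inv_inv : ∀ g, inv (inv g) = g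
  inv_mul_isSome : ∀ g, (mul (inv g) g).isSome
  defined_iff : ∀ g h, (mul g h).isSome ↔ mul (inv g) g = mul h (inv h)
  massoc : ∀ {g h k gh hk}, mul g h = some gh → mul h k = some hk →
      mul gh k = mul g hk
  inv_mul_cancel : ∀ {g h gh}, mul g h = some gh → mul (inv g) gh = some h
  mul_inv_cancel : ∀ {g h gh}, mul g h = some gh → mul gh (inv h) = some g
  mul_src : ∀ {g u}, mul (inv g) g = some u → mul g u = some g
  rng_mul : ∀ {g u}, mul g (inv g) = some u → mul u g = some g

namespace Gpd

variable {G Y : Type*} (𝒢 : Gpd G)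

/-- The source `s(g) = g⁻¹g`. -/
def src (g : G) : G := (𝒢.mul (𝒢.inv g) g).getD g

/-- The range `r(g) = gg⁻¹`. -/
def rng (g : G) : G := (𝒢.mul g (𝒢.inv g)).getD g

/-- The unit space `G⁰`. -/
def unitSpace : Set G := Set.range 𝒢.src

/-- The isotropy `G^iso`. -/
def iso : Set G := {g | 𝒢.src g = 𝒢.rng g}

/-- Bisections. -/
def IsBisection (B : Set G) : Prop :=
  ∀ g ∈ B, ∀ h ∈ B, (𝒢.src g = 𝒢.src h ∨ 𝒢.rng g = 𝒢.rng h) → g = h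

/-- Isosections. -/
def IsIsosection (I : Set G) : Prop :=
  ∀ g ∈ I, ∀ h ∈ I, (𝒢.src g = 𝒢.src h ↔ 𝒢.rng g = 𝒢.rng h)

/-- Product of subsets. -/
def setMul (A B : Set G) : Set G := {x | ∃ g ∈ A, ∃ h ∈ B, 𝒢.mul g h = some x}

/-- Inverse of a subset. -/
def setInv (A : Set G) : Set G := 𝒢.inv '' A

end Gpd

/-- The domain of a `Y`-valued partial function on `G`. -/
def pdom {G Y : Type*} (a : G → Option Y) : Set G := {g | (a g).isSome}

open Classical in
/-- The product of partial functions, `ab(gh) = a(g)b(h)` on factorizations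
(well-defined when a domain is a bisection; defined by choice in general). -/
noncomputable def Gpd.convProd {G Y : Type*} [Mul Y] (𝒢 : Gpd G)
    (a b : G → Option Y) : G → Option Y := fun x =>
  if h : ∃ p : Y × Y, ∃ g k : G, a g = some p.1 ∧ b k = some p.2 ∧ 𝒢.mul g k = some x
  then some (h.choose.1 * h.choose.2) else none

/-- The set `[Y^×]a` where the function takes invertible values. -/
def unitsPre {G Y : Type*} [Monoid Y] (a : G → Option Y) : Set G :=
  {g | ∃ y, a g = some y ∧ IsUnit y}

/-- The set `[1]a` where the function takes the value `1`. -/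
def onePre {G Y : Type*} [Monoid Y] (a : G → Option Y) : Set G :=
  {g | a g = some (1 : Y)}

/-- A unital semigroup is `1`-cancellative if `xy = x ↔ y = 1 ↔ yx = x`. -/
def OneCancellative (Y : Type*) [Monoid Y] : Prop :=
  ∀ x y : Y, (x * y = x ↔ y = 1) ∧ (y * x = x ↔ y = 1)

/-- The domination relation `a ≺_s b` relative to a diagonal `D`. -/
def precS {α : Type*} (m : α → α → α) (D : Set α) (a s b : α) : Prop :=
  m (m a s) b = a ∧ m (m b s) a = a ∧ m a s ∈ D ∧ m s a ∈ D

/-- Étale: inversion and multiplication continuous, source a local homeomorphism. -/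
def Gpd.Etale {G : Type*} [TopologicalSpace G] (𝒢 : Gpd G) : Prop :=
  Continuous 𝒢.inv ∧
  Continuous (fun p : {p : G × G // (𝒢.mul p.1 p.2).isSome} =>
    (𝒢.mul p.val.1 p.val.2).get p.property) ∧
  IsLocalHomeomorph 𝒢.src

/-- Ample: étale with a basis of compact open bisections. -/
def Gpd.Ample {G : Type*} [TopologicalSpace G] (𝒢 : Gpd G) : Prop :=
  𝒢.Etale ∧ TopologicalSpace.IsTopologicalBasis
    {O : Set G | IsCompact O ∧ IsOpen O ∧ 𝒢.IsBisection O}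

/-- Bumpy semigroups of `Y`-valued functions on open bisections. -/
structure Gpd.IsBumpy {G Y : Type*} [TopologicalSpace G] [Monoid Y] (𝒢 : Gpd G)
    (S : Set (G → Option Y)) : Prop where
  domBisection : ∀ a ∈ S, 𝒢.IsBisection (pdom a)
  domOpen : ∀ a ∈ S, IsOpen (pdom a)
  mulClosed : ∀ a ∈ S, ∀ b ∈ S, 𝒢.convProd a b ∈ S
  oneProper : ∀ a ∈ S, IsCompact (onePre a)
  empty_mem : (fun _ => (none : Option Y)) ∈ S
  urysohn : ∀ O : Set G, IsOpen O → ∀ g ∈ O, ∃ a ∈ S,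
    pdom a ⊆ O ∧ g ∈ interior (unitsPre a)
  involutive : ∀ a ∈ S, ∀ g ∈ interior (unitsPre a), ∃ b ∈ S,
    𝒢.inv g ∈ interior {h | ∃ y z, a (𝒢.inv h) = some y ∧ b h = some z ∧
      y * z = 1 ∧ z * y = 1}

/-- Compact-bumpy semigroups. -/
structure Gpd.IsCompactBumpy {G Y : Type*} [TopologicalSpace G] [Monoid Y] (𝒢 : Gpd G)
    (S : Set (G → Option Y)) : Prop where
  bumpy : 𝒢.IsBumpy S
  compactUrysohn : ∀ C O : Set G, IsCompact C → 𝒢.IsBisection C → IsOpen O →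
    𝒢.IsBisection O → C ⊆ O → ∃ a ∈ S, pdom a ⊆ O ∧ C ⊆ unitsPre a
  compactInvolutive : ∀ a ∈ S, ∀ C ⊆ unitsPre a, IsCompact C → ∃ b ∈ S,
    ∀ g ∈ C, ∃ y z, a g = some y ∧ b (𝒢.inv g) = some z ∧ y * z = 1 ∧ z * y = 1


namespace GpdAux

variable {G Y : Type*} (𝒢 : Gpd G)

lemma inv_mul_eq_src (g : G) : 𝒢.mul (𝒢.inv g) g = some (𝒢.src g) := by
  obtain ⟨u, hu⟩ := Option.isSome_iff_exists.mp (𝒢.inv_mul_isSome g)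
  rw [Gpd.src, hu]; rfl

lemma mul_inv_eq_rng (g : G) : 𝒢.mul g (𝒢.inv g) = some (𝒢.rng g) := by
  have h := 𝒢.inv_mul_isSome (𝒢.inv g)
  rw [𝒢.inv_inv] at h
  obtain ⟨u, hu⟩ := Option.isSome_iff_exists.mp h
  rw [Gpd.rng, hu]; rfl

lemma isSome_iff_src_eq_rng (g h : G) :
    (𝒢.mul g h).isSome ↔ 𝒢.src g = 𝒢.rng h := by
  rw [𝒢.defined_iff, inv_mul_eq_src, mul_inv_eq_rng, Option.some_inj]

lemma src_mul {g h x : G} (hx : 𝒢.mul g h = some x) : 𝒢.src x = 𝒢.src h := by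
  have h1 : 𝒢.mul x (𝒢.inv h) = some g := 𝒢.mul_inv_cancel hx
  have h2 := (𝒢.defined_iff x (𝒢.inv h)).mp (by rw [h1]; rfl)
  rw [𝒢.inv_inv, inv_mul_eq_src, inv_mul_eq_src, Option.some_inj] at h2
  exact h2

lemma rng_mul_eq {g h x : G} (hx : 𝒢.mul g h = some x) : 𝒢.rng x = 𝒢.rng g := by
  have h1 : 𝒢.mul (𝒢.inv g) x = some h := 𝒢.inv_mul_cancel hx
  have h2 := (𝒢.defined_iff (𝒢.inv g) x).mp (by rw [h1]; rfl)
  rw [𝒢.inv_inv, mul_inv_eq_rng, mul_inv_eq_rng, Option.some_inj] at h2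
  exact h2.symm

lemma left_cancel {g h h' x : G} (e : 𝒢.mul g h = some x) (e' : 𝒢.mul g h' = some x) :
    h = h' := by
  have a1 := 𝒢.inv_mul_cancel e
  have a2 := 𝒢.inv_mul_cancel e'
  rw [a1, Option.some_inj] at a2
  exact a2

lemma factor_unique {A B : Set G} (hA : 𝒢.IsBisection A) (hB : 𝒢.IsBisection B)
    {g h g' h' x : G} (hg : g ∈ A) (hh : h ∈ B) (hg' : g' ∈ A) (hh' : h' ∈ B)
    (e : 𝒢.mul g h = some x) (e' : 𝒢.mul g' h' = some x) : g = g' ∧ h = h' := by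
  have hr : 𝒢.rng g = 𝒢.rng g' := by
    rw [← rng_mul_eq 𝒢 e, rng_mul_eq 𝒢 e']
  have hgg : g = g' := hA g hg g' hg' (Or.inr hr)
  subst hgg
  exact ⟨rfl, left_cancel 𝒢 e e'⟩

lemma mem_pdom_iff {a : G → Option Y} {g : G} : g ∈ pdom a ↔ ∃ y, a g = some y := by
  simp [pdom, Option.isSome_iff_exists]

lemma setMul_bisection {A B : Set G} (hA : 𝒢.IsBisection A) (hB : 𝒢.IsBisection B) :
    𝒢.IsBisection (𝒢.setMul A B) := by
  rintro x ⟨g, hg, h, hh, e⟩ x' ⟨g', hg', h', hh', e'⟩ hor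
  have cgh : 𝒢.src g = 𝒢.rng h := (isSome_iff_src_eq_rng 𝒢 g h).mp (by rw [e]; rfl)
  have cgh' : 𝒢.src g' = 𝒢.rng h' := (isSome_iff_src_eq_rng 𝒢 g' h').mp (by rw [e']; rfl)
  rcases hor with hs | hr
  · rw [src_mul 𝒢 e, src_mul 𝒢 e'] at hs
    have hhh : h = h' := hB h hh h' hh' (Or.inl hs)
    subst hhh
    have hgg : g = g' := hA g hg g' hg' (Or.inl (by rw [cgh, cgh']))
    subst hgg
    rw [e, Option.some_inj] at e'
    exact e'
  · rw [rng_mul_eq 𝒢 e, rng_mul_eq 𝒢 e'] at hr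
    have hgg : g = g' := hA g hg g' hg' (Or.inr hr)
    subst hgg
    have hhh : h = h' := hB h hh h' hh' (Or.inr (by rw [← cgh, ← cgh']))
    subst hhh
    rw [e, Option.some_inj] at e'
    exact e'

variable [Mul Y]

lemma convProd_eq_some {a b : G → Option Y}
    (ha : 𝒢.IsBisection (pdom a)) (hb : 𝒢.IsBisection (pdom b))
    {g h x : G} {ya yb : Y}
    (e1 : a g = some ya) (e2 : b h = some yb) (e3 : 𝒢.mul g h = some x) :
    𝒢.convProd a b x = some (ya * yb) := by
  have hex : ∃ p : Y × Y, ∃ g' k' : G,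
      a g' = some p.1 ∧ b k' = some p.2 ∧ 𝒢.mul g' k' = some x :=
    ⟨(ya, yb), g, h, e1, e2, e3⟩
  rw [Gpd.convProd, dif_pos hex]
  obtain ⟨g', k', f1, f2, f3⟩ := hex.choose_spec
  have hmg : g' ∈ pdom a := mem_pdom_iff.mpr ⟨_, f1⟩
  have hmk : k' ∈ pdom b := mem_pdom_iff.mpr ⟨_, f2⟩
  have hg : g ∈ pdom a := mem_pdom_iff.mpr ⟨_, e1⟩
  have hh : h ∈ pdom b := mem_pdom_iff.mpr ⟨_, e2⟩
  obtain ⟨u1, u2⟩ := factor_unique 𝒢 ha hb hmg hmk hg hh f3 e3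
  subst u1; subst u2
  rw [e1, Option.some_inj] at f1
  rw [e2, Option.some_inj] at f2
  rw [f1, f2]

lemma pdom_convProd (a b : G → Option Y) :
    pdom (𝒢.convProd a b) = 𝒢.setMul (pdom a) (pdom b) := by
  ext x
  constructor
  · intro hx
    by_cases h : ∃ p : Y × Y, ∃ g k : G,
        a g = some p.1 ∧ b k = some p.2 ∧ 𝒢.mul g k = some x
    · obtain ⟨p, g, k, f1, f2, f3⟩ := h
      exact ⟨g, mem_pdom_iff.mpr ⟨_, f1⟩, k, mem_pdom_iff.mpr ⟨_, f2⟩, f3⟩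
    · exfalso
      have : 𝒢.convProd a b x = none := by rw [Gpd.convProd, dif_neg h]
      simp [pdom, this] at hx
  · rintro ⟨g, hg, k, hk, hm⟩
    obtain ⟨ya, e1⟩ := mem_pdom_iff.mp hg
    obtain ⟨yb, e2⟩ := mem_pdom_iff.mp hk
    have : 𝒢.convProd a b x ≠ none := by
      rw [Gpd.convProd, dif_pos ⟨(ya, yb), g, k, e1, e2, hm⟩]
      simp
    simpa [pdom, Option.isSome_iff_ne_none] using this

end GpdAux

open GpdAux in
/-- partial functions with bisection domains form a semigroup under
`(ab)(gh) = a(g)b(h)`; the product is well defined with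
`dom(ab) = dom(a)·dom(b)`, which is again a bisection. -/
theorem stmt1 {G Y : Type*} [Semigroup Y] (𝒢 : Gpd G) :
    (∀ a b : G → Option Y, 𝒢.IsBisection (pdom a) → 𝒢.IsBisection (pdom b) →
      (∀ g h x ya yb, a g = some ya → b h = some yb → 𝒢.mul g h = some x →
        𝒢.convProd a b x = some (ya * yb)) ∧
      pdom (𝒢.convProd a b) = 𝒢.setMul (pdom a) (pdom b) ∧
      𝒢.IsBisection (𝒢.setMul (pdom a) (pdom b))) ∧
    (∀ a b c : G → Option Y, 𝒢.IsBisection (pdom a) → 𝒢.IsBisection (pdom b) →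
      𝒢.IsBisection (pdom c) →
      𝒢.convProd (𝒢.convProd a b) c = 𝒢.convProd a (𝒢.convProd b c)) := by
  constructor
  · intro a b ha hb
    exact ⟨fun g h x ya yb e1 e2 e3 => convProd_eq_some 𝒢 ha hb e1 e2 e3,
      pdom_convProd 𝒢 a b, setMul_bisection 𝒢 ha hb⟩
  · intro a b c ha hb hc
    have hab : 𝒢.IsBisection (pdom (𝒢.convProd a b)) := by
      rw [pdom_convProd]; exact setMul_bisection 𝒢 ha hb
    have hbc : 𝒢.IsBisection (pdom (𝒢.convProd b c)) := by
      rw [pdom_convProd]; exact setMul_bisection 𝒢 hb hc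
    funext x
    by_cases hx : ∃ g h k w v : G, ∃ ya yb yc : Y,
        a g = some ya ∧ b h = some yb ∧ c k = some yc ∧
        𝒢.mul g h = some w ∧ 𝒢.mul h k = some v ∧ 𝒢.mul w k = some x
    · obtain ⟨g, h, k, w, v, ya, yb, yc, e1, e2, e3, m1, m2, m3⟩ := hx
      have m4 : 𝒢.mul g v = some x := by rw [← 𝒢.massoc m1 m2, m3]
      have eab : 𝒢.convProd a b w = some (ya * yb) := convProd_eq_some 𝒢 ha hb e1 e2 m1
      have ebc : 𝒢.convProd b c v = some (yb * yc) := convProd_eq_some 𝒢 hb hc e2 e3 m2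
      rw [convProd_eq_some 𝒢 hab hc eab e3 m3,
        convProd_eq_some 𝒢 ha hbc e1 ebc m4, mul_assoc]
    · have hL : 𝒢.convProd (𝒢.convProd a b) c x = none := by
        rw [Gpd.convProd, dif_neg]
        rintro ⟨p, w, k, f1, f2, f3⟩
        have hw : w ∈ 𝒢.setMul (pdom a) (pdom b) := by
          rw [← pdom_convProd]; exact mem_pdom_iff.mpr ⟨_, f1⟩
        obtain ⟨g, hg, h, hh, m1⟩ := hw
        obtain ⟨ya, e1⟩ := mem_pdom_iff.mp hg
        obtain ⟨yb, e2⟩ := mem_pdom_iff.mp hh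
        have hhk : (𝒢.mul h k).isSome := by
          rw [isSome_iff_src_eq_rng, ← src_mul 𝒢 m1,
            ← isSome_iff_src_eq_rng, f3]; rfl
        obtain ⟨v, m2⟩ := Option.isSome_iff_exists.mp hhk
        obtain ⟨yc, e3⟩ := Option.isSome_iff_exists.mp (by rw [f2]; rfl : (c k).isSome)
        exact hx ⟨g, h, k, w, v, ya, yb, yc, e1, e2, e3, m1, m2, f3⟩
      have hR : 𝒢.convProd a (𝒢.convProd b c) x = none := by
        rw [Gpd.convProd, dif_neg]
        rintro ⟨p, g, v, f1, f2, f3⟩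
        have hv : v ∈ 𝒢.setMul (pdom b) (pdom c) := by
          rw [← pdom_convProd]; exact mem_pdom_iff.mpr ⟨_, f2⟩
        obtain ⟨h, hh, k, hk, m2⟩ := hv
        obtain ⟨yb, e2⟩ := mem_pdom_iff.mp hh
        obtain ⟨yc, e3⟩ := mem_pdom_iff.mp hk
        obtain ⟨ya, e1⟩ := Option.isSome_iff_exists.mp (by rw [f1]; rfl : (a g).isSome)
        have hgh : (𝒢.mul g h).isSome := by
          rw [isSome_iff_src_eq_rng, ← rng_mul_eq 𝒢 m2,
            ← isSome_iff_src_eq_rng, f3]; rfl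
        obtain ⟨w, m1⟩ := Option.isSome_iff_exists.mp hgh
        have m3 : 𝒢.mul w k = some x := by rw [𝒢.massoc m1 m2, f3]
        exact hx ⟨g, h, k, w, v, ya, yb, yc, e1, e2, e3, m1, m2, m3⟩
      rw [hL, hR]
end

section
/- Let S be a semigroup with a subsemigroup D, and define a ≺_s b iff asb = a = bsa and as, sa ∈ D. Then the relation is transitive in the strong sense: if a ≺_{b'} b and b ≺_{c'} c then a ≺_{c'} c. -/
/-- transitivity of domination: `a ≺_{b'} b ≺_{c'} c ⟹ a ≺_{c'} c`. -/
theorem stmt3 {S : Type*} [Semigroup S] (D : Set S)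
    (hD : ∀ x ∈ D, ∀ y ∈ D, x * y ∈ D)
    (a b' b c' c : S)
    (h1 : a * b' * b = a ∧ b * b' * a = a ∧ a * b' ∈ D ∧ b' * a ∈ D)
    (h2 : b * c' * c = b ∧ c * c' * b = b ∧ b * c' ∈ D ∧ c' * b ∈ D) :
    a * c' * c = a ∧ c * c' * a = a ∧ a * c' ∈ D ∧ c' * a ∈ D := by
  obtain ⟨h1a, h1b, h1c, h1d⟩ := h1
  obtain ⟨h2a, h2b, h2c, h2d⟩ := h2
  have key1 : a * c' * c = a := by
    calc a * c' * c = a * b' * b * c' * c := by rw [h1a]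
    _ = a * b' * (b * c' * c) := by simp [mul_assoc]
    _ = a := by rw [h2a, h1a]
  have key2 : c * c' * a = a := by
    calc c * c' * a = c * c' * (b * b' * a) := by rw [h1b]
    _ = (c * c' * b) * (b' * a) := by simp [mul_assoc]
    _ = a := by rw [h2b, ← mul_assoc, h1b]
  have key3 : a * c' = (a * b') * (b * c') := by
    calc a * c' = (a * b' * b) * c' := by rw [h1a]
    _ = (a * b') * (b * c') := by simp [mul_assoc]
  have key4 : c' * a = (c' * b) * (b' * a) := by
    calc c' * a = c' * (b * b' * a) := by rw [h1b]
    _ = (c' * b) * (b' * a) := by simp [mul_assoc]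
  exact ⟨key1, key2, key3 ▸ hD _ h1c _ h2c, key4 ▸ hD _ h2d _ h1d⟩
end

section
/- Let S be a semigroup with a subsemigroup D. If a ≺_b c (i.e. abc = a = cba and ab, ba ∈ D), then bab ≺_c b (i.e. (bab)c b = bab = b c (bab) and (bab)c, c(bab) ∈ D). -/
/-- switch: `a ≺_b c ⟹ bab ≺_c b`. -/
theorem stmt4 {S : Type*} [Semigroup S] (D : Set S)
    (hD : ∀ x ∈ D, ∀ y ∈ D, x * y ∈ D)
    (a b c : S)
    (h : a * b * c = a ∧ c * b * a = a ∧ a * b ∈ D ∧ b * a ∈ D) :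
    (b * a * b) * c * b = b * a * b ∧ b * c * (b * a * b) = b * a * b ∧
      (b * a * b) * c ∈ D ∧ c * (b * a * b) ∈ D := by
  obtain ⟨h1, h2, h3, h4⟩ := h
  have k1 : (b * a * b) * c = b * a := by
    calc (b * a * b) * c = b * (a * b * c) := by simp [mul_assoc]
    _ = b * a := by rw [h1]
  have k2 : c * (b * a * b) = a * b := by
    calc c * (b * a * b) = (c * b * a) * b := by simp [mul_assoc]
    _ = a * b := by rw [h2]
  refine ⟨?_, ?_, by rw [k1]; exact h4, by rw [k2]; exact h3⟩
  · rw [k1]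
  · calc b * c * (b * a * b) = b * (c * (b * a * b)) := by rw [mul_assoc]
    _ = b * (a * b) := by rw [k2]
    _ = b * a * b := by rw [mul_assoc]
end

section
/- Let G be a groupoid, Y a 1-cancellative unital semigroup, S a semigroup of Y-valued partial functions on G defined on bisections with the pointwise-on-factorizations product, and D the subset of elements of S with domain contained in G⁰. Then for a, b', b ∈ S: a ≺_{b'} b if and only if dom(a) ⊆ dom(b')⁻¹(G⁰ ∩ [1](b'b)) ∩ (G⁰ ∩ [1](bb'))dom(b')⁻¹, where [1]c denotes the preimage c⁻¹({1}). -/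
namespace Gpd

variable {G : Type*} (𝒢 : Gpd G)

lemma src_spec (g : G) : 𝒢.mul (𝒢.inv g) g = some (𝒢.src g) := by
  obtain ⟨u, hu⟩ := Option.isSome_iff_exists.mp (𝒢.inv_mul_isSome g)
  simp [src, hu]

lemma rng_spec (g : G) : 𝒢.mul g (𝒢.inv g) = some (𝒢.rng g) := by
  have h := 𝒢.inv_mul_isSome (𝒢.inv g)
  rw [𝒢.inv_inv] at h
  obtain ⟨u, hu⟩ := Option.isSome_iff_exists.mp h
  simp [rng, hu]

lemma mul_src_self (g : G) : 𝒢.mul g (𝒢.src g) = some g := 𝒢.mul_src (𝒢.src_spec g)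

lemma mul_rng_self (g : G) : 𝒢.mul (𝒢.rng g) g = some g := 𝒢.rng_mul (𝒢.rng_spec g)

lemma src_inv (g : G) : 𝒢.src (𝒢.inv g) = 𝒢.rng g := by
  have h := 𝒢.src_spec (𝒢.inv g)
  rw [𝒢.inv_inv, 𝒢.rng_spec] at h
  exact (Option.some_injective _ h).symm

lemma rng_inv (g : G) : 𝒢.rng (𝒢.inv g) = 𝒢.src g := by
  have h := 𝒢.src_inv (𝒢.inv g)
  rw [𝒢.inv_inv] at h
  exact h.symm

lemma src_mem (g : G) : 𝒢.src g ∈ 𝒢.unitSpace := ⟨g, rfl⟩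

lemma rng_mem (g : G) : 𝒢.rng g ∈ 𝒢.unitSpace := ⟨𝒢.inv g, 𝒢.src_inv g⟩

lemma inv_unit {u : G} (hu : u ∈ 𝒢.unitSpace) : 𝒢.inv u = u := by
  obtain ⟨t, rfl⟩ := hu
  have h1 : 𝒢.mul t (𝒢.src t) = some t := 𝒢.mul_src_self t
  have h2 : 𝒢.mul t (𝒢.inv (𝒢.src t)) = some t := 𝒢.mul_inv_cancel h1
  have h3 : 𝒢.mul (𝒢.inv t) t = some (𝒢.inv (𝒢.src t)) := 𝒢.inv_mul_cancel h2
  rw [𝒢.src_spec] at h3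
  exact (Option.some_injective _ h3).symm

lemma mul_unit_self {u : G} (hu : u ∈ 𝒢.unitSpace) : 𝒢.mul u u = some u := by
  obtain ⟨t, ht⟩ := hu
  have hs : (𝒢.mul u u).isSome := by
    have := 𝒢.inv_mul_isSome u
    rwa [𝒢.inv_unit ⟨t, ht⟩] at this
  obtain ⟨w, hw⟩ := Option.isSome_iff_exists.mp hs
  have h1 : 𝒢.mul t u = some t := by rw [← ht]; exact 𝒢.mul_src_self t
  have h2 := 𝒢.massoc h1 hw
  rw [h1] at h2
  have h3 := 𝒢.inv_mul_cancel h2.symm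
  rw [𝒢.src_spec] at h3
  have hwu : w = u := by rw [← ht]; exact (Option.some_injective _ h3).symm
  rw [hw, hwu]

lemma src_unit {u : G} (hu : u ∈ 𝒢.unitSpace) : 𝒢.src u = u := by
  have h := 𝒢.src_spec u
  rw [𝒢.inv_unit hu, 𝒢.mul_unit_self hu] at h
  exact (Option.some_injective _ h).symm

lemma rng_unit {u : G} (hu : u ∈ 𝒢.unitSpace) : 𝒢.rng u = u := by
  have h := 𝒢.rng_spec u
  rw [𝒢.inv_unit hu, 𝒢.mul_unit_self hu] at h
  exact (Option.some_injective _ h).symm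

lemma src_eq_rng_of_mul {g h x : G} (hm : 𝒢.mul g h = some x) :
    𝒢.src g = 𝒢.rng h := by
  have := (𝒢.defined_iff g h).mp (by rw [hm]; rfl)
  rw [𝒢.src_spec, 𝒢.rng_spec] at this
  exact Option.some_injective _ this

lemma src_of_mul {g h x : G} (hm : 𝒢.mul g h = some x) : 𝒢.src x = 𝒢.src h := by
  have h1 : 𝒢.mul x (𝒢.inv h) = some g := 𝒢.mul_inv_cancel hm
  have h2 : 𝒢.mul (𝒢.inv h) h = some (𝒢.src h) := 𝒢.src_spec h
  have h3 := 𝒢.massoc h1 h2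
  rw [hm] at h3
  have h4 := 𝒢.inv_mul_cancel h3.symm
  rw [𝒢.src_spec] at h4
  exact Option.some_injective _ h4

lemma rng_of_mul {g h x : G} (hm : 𝒢.mul g h = some x) : 𝒢.rng x = 𝒢.rng g := by
  have h1 : 𝒢.mul (𝒢.inv g) x = some h := 𝒢.inv_mul_cancel hm
  have h2 : 𝒢.mul g (𝒢.inv g) = some (𝒢.rng g) := 𝒢.rng_spec g
  have h3 := 𝒢.massoc h2 h1
  rw [hm] at h3
  have h4 := 𝒢.mul_inv_cancel h3
  rw [𝒢.rng_spec] at h4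
  exact Option.some_injective _ h4

lemma unit_mul {u k g : G} (hu : u ∈ 𝒢.unitSpace) (h : 𝒢.mul u k = some g) :
    g = k ∧ u = 𝒢.rng k := by
  have hd := (𝒢.defined_iff u k).mp (by rw [h]; rfl)
  rw [𝒢.inv_unit hu, 𝒢.mul_unit_self hu, 𝒢.rng_spec] at hd
  have hur : u = 𝒢.rng k := Option.some_injective _ hd
  have h2 : 𝒢.mul u k = some k := by rw [hur]; exact 𝒢.mul_rng_self k
  rw [h2] at h
  exact ⟨(Option.some_injective _ h).symm, hur⟩

lemma mul_unit {u k g : G} (hu : u ∈ 𝒢.unitSpace) (h : 𝒢.mul k u = some g) :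
    g = k ∧ u = 𝒢.src k := by
  have hd := (𝒢.defined_iff k u).mp (by rw [h]; rfl)
  rw [𝒢.inv_unit hu, 𝒢.mul_unit_self hu, 𝒢.src_spec] at hd
  have hus : u = 𝒢.src k := (Option.some_injective _ hd).symm
  have h2 : 𝒢.mul k u = some k := by rw [hus]; exact 𝒢.mul_src_self k
  rw [h2] at h
  exact ⟨(Option.some_injective _ h).symm, hus⟩

section Conv

set_option linter.unusedSectionVars false

variable {Y : Type*} [Mul Y]

lemma convProd_eq_some (a b : G → Option Y) {g k x : G} {y z : Y}
    (hg : a g = some y) (hk : b k = some z) (hx : 𝒢.mul g k = some x)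
    (huniq : ∀ g' k' (y' z' : Y), a g' = some y' → b k' = some z' →
      𝒢.mul g' k' = some x → g' = g ∧ k' = k) :
    𝒢.convProd a b x = some (y * z) := by
  have hex : ∃ p : Y × Y, ∃ g' k' : G,
      a g' = some p.1 ∧ b k' = some p.2 ∧ 𝒢.mul g' k' = some x :=
    ⟨(y, z), g, k, hg, hk, hx⟩
  rw [Gpd.convProd, dif_pos hex]
  obtain ⟨g', k', h1, h2, h3⟩ := hex.choose_spec
  obtain ⟨rfl, rfl⟩ := huniq g' k' _ _ h1 h2 h3
  rw [hg] at h1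
  rw [hk] at h2
  injection h1 with e1
  injection h2 with e2
  rw [← e1, ← e2]

lemma convProd_elim {a b : G → Option Y} {x : G} {v : Y}
    (h : 𝒢.convProd a b x = some v) :
    ∃ g k, ∃ y z : Y, a g = some y ∧ b k = some z ∧ 𝒢.mul g k = some x ∧
      v = y * z := by
  rw [Gpd.convProd] at h
  by_cases hex : ∃ p : Y × Y, ∃ g k : G,
      a g = some p.1 ∧ b k = some p.2 ∧ 𝒢.mul g k = some x
  · rw [dif_pos hex] at h
    obtain ⟨g, k, h1, h2, h3⟩ := hex.choose_spec
    exact ⟨g, k, _, _, h1, h2, h3, (Option.some_injective _ h).symm⟩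
  · rw [dif_neg hex] at h
    exact absurd h (by simp)

lemma convProd_dom_elim {a b : G → Option Y} {x : G}
    (h : x ∈ pdom (𝒢.convProd a b)) :
    ∃ g k, ∃ y z : Y, a g = some y ∧ b k = some z ∧ 𝒢.mul g k = some x := by
  obtain ⟨v, hv⟩ := Option.isSome_iff_exists.mp h
  obtain ⟨g, k, y, z, h1, h2, h3, _⟩ := 𝒢.convProd_elim hv
  exact ⟨g, k, y, z, h1, h2, h3⟩

lemma convProd_none (a b : G → Option Y) {x : G}
    (h : ∀ g k (y z : Y), a g = some y → b k = some z → 𝒢.mul g k ≠ some x) :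
    𝒢.convProd a b x = none := by
  rw [Gpd.convProd, dif_neg]
  rintro ⟨p, g, k, h1, h2, h3⟩
  exact h g k _ _ h1 h2 h3

/-- uniqueness of factorizations when the left domain is a bisection -/
lemma uniq_left {a : G → Option Y} (hA : 𝒢.IsBisection (pdom a))
    {g g' k k' x : G} {y y' : Y} (hg : a g = some y) (hg' : a g' = some y')
    (hx : 𝒢.mul g k = some x) (hx' : 𝒢.mul g' k' = some x) :
    g' = g ∧ k' = k := by
  have hgm : g ∈ pdom a := by simp [pdom, hg]
  have hgm' : g' ∈ pdom a := by simp [pdom, hg']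
  have he : g' = g := hA g' hgm' g hgm (Or.inr (by
    rw [← 𝒢.rng_of_mul hx', ← 𝒢.rng_of_mul hx]))
  subst he
  have h1 := 𝒢.inv_mul_cancel hx
  have h2 := 𝒢.inv_mul_cancel hx'
  rw [h1] at h2
  exact ⟨rfl, (Option.some_injective _ h2).symm⟩

/-- uniqueness of factorizations when the right domain is a bisection -/
lemma uniq_right {b : G → Option Y} (hB : 𝒢.IsBisection (pdom b))
    {g g' k k' x : G} {z z' : Y} (hk : b k = some z) (hk' : b k' = some z')
    (hx : 𝒢.mul g k = some x) (hx' : 𝒢.mul g' k' = some x) :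
    g' = g ∧ k' = k := by
  have hkm : k ∈ pdom b := by simp [pdom, hk]
  have hkm' : k' ∈ pdom b := by simp [pdom, hk']
  have he : k' = k := hB k' hkm' k hkm (Or.inl (by
    rw [← 𝒢.src_of_mul hx', ← 𝒢.src_of_mul hx]))
  subst he
  have h1 := 𝒢.mul_inv_cancel hx
  have h2 := 𝒢.mul_inv_cancel hx'
  rw [h1] at h2
  exact ⟨(Option.some_injective _ h2).symm, rfl⟩

end Conv

end Gpd

/-- characterisation of domination on semigroups of functions with
bisection domains:
`a ≺_{b'} b ⟺ dom(a) ⊆ dom(b')⁻¹(G⁰ ∩ [1]b'b) ∩ (G⁰ ∩ [1]bb')dom(b')⁻¹`. -/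
theorem stmt6 {G Y : Type*} [Monoid Y] (𝒢 : Gpd G) (hY : OneCancellative Y)
    (S : Set (G → Option Y))
    (hSbis : ∀ a ∈ S, 𝒢.IsBisection (pdom a))
    (hSmul : ∀ a ∈ S, ∀ b ∈ S, 𝒢.convProd a b ∈ S)
    (D : Set (G → Option Y)) (hDdef : D = {d ∈ S | pdom d ⊆ 𝒢.unitSpace})
    (a b' b : G → Option Y) (ha : a ∈ S) (hb' : b' ∈ S) (hb : b ∈ S) :
    precS 𝒢.convProd D a b' b ↔
      pdom a ⊆
        𝒢.setMul (𝒢.setInv (pdom b')) (𝒢.unitSpace ∩ onePre (𝒢.convProd b' b)) ∩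
        𝒢.setMul (𝒢.unitSpace ∩ onePre (𝒢.convProd b b')) (𝒢.setInv (pdom b')) := by
  have Ba := hSbis a ha
  have Bb' := hSbis b' hb'
  have Bb := hSbis b hb
  constructor
  · rintro ⟨h1, h2, h3, _h4⟩
    rw [hDdef] at h3
    intro g hg
    obtain ⟨y, hy⟩ := Option.isSome_iff_exists.mp hg
    -- analyze (a b') b = a at g
    have hag : 𝒢.convProd (𝒢.convProd a b') b g = some y := by rw [h1, hy]
    obtain ⟨u, k, y1, z, hu, hk, hmul, hval⟩ := 𝒢.convProd_elim hag
    obtain ⟨g1, h0, yA, yB, hg1, hh0, hmul2, hval2⟩ := 𝒢.convProd_elim hu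
    have huU : u ∈ 𝒢.unitSpace := h3.2 (by simp [pdom, hu])
    obtain ⟨hgk, hur⟩ := 𝒢.unit_mul huU hmul
    rw [← hgk] at hk hur
    -- g1 = g
    have hrg : 𝒢.rng g1 = 𝒢.rng g := by
      rw [← 𝒢.rng_of_mul hmul2, 𝒢.rng_unit huU]
      exact hur
    have hg1g : g1 = g := Ba g1 (by simp [pdom, hg1]) g hg (Or.inr hrg)
    rw [hg1g] at hg1 hmul2
    -- h0 = inv g
    have hh0inv : h0 = 𝒢.inv g := by
      have e1 := 𝒢.inv_mul_cancel hmul2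
      rw [hur] at e1
      have e2 := 𝒢.mul_src_self (𝒢.inv g)
      rw [𝒢.src_inv] at e2
      rw [e2] at e1
      exact (Option.some_injective _ e1).symm
    rw [hh0inv] at hh0
    have hinvdom : 𝒢.inv g ∈ pdom b' := by simp [pdom, hh0]
    -- values
    have hyA : yA = y := by
      rw [hy] at hg1
      exact (Option.some_injective _ hg1).symm
    rw [hyA] at hval2
    subst hval2
    have hone1 : yB * z = 1 := by
      have e : y * (yB * z) = y := by
        rw [← mul_assoc]
        exact hval.symm
      exact (hY y (yB * z)).1.mp e
    -- (b'b)(src g) = 1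
    have hbb : 𝒢.convProd b' b (𝒢.src g) = some 1 := by
      have e := 𝒢.convProd_eq_some b' b hh0 hk (𝒢.src_spec g)
        (fun g' k' y' z' e1 e2 e3 => 𝒢.uniq_left Bb' hh0 e1 (𝒢.src_spec g) e3)
      rw [hone1] at e
      exact e
    -- second part, via (b b') a = a
    have hag2 : 𝒢.convProd (𝒢.convProd b b') a g = some y := by rw [h2, hy]
    obtain ⟨u', m, v1, yM, hu', hm, hmul', hval'⟩ := 𝒢.convProd_elim hag2
    obtain ⟨g2, h2', z2, w2, hg2, hh2', hmul3, hval3⟩ := 𝒢.convProd_elim hu'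
    have hmg : m = g := Ba m (by simp [pdom, hm]) g hg
      (Or.inl (𝒢.src_of_mul hmul').symm)
    rw [hmg] at hm hmul'
    have hyM : yM = y := by
      rw [hy] at hm
      exact (Option.some_injective _ hm).symm
    rw [hyM] at hval'
    subst hval3
    have hu'rng : u' = 𝒢.rng g := by
      have e := 𝒢.mul_inv_cancel hmul'
      rw [𝒢.rng_spec] at e
      exact (Option.some_injective _ e).symm
    have hone2 : z2 * w2 = 1 := by
      have e : (z2 * w2) * y = y := hval'.symm
      exact (hY y (z2 * w2)).2.mp e
    have hbb2 : 𝒢.convProd b b' (𝒢.rng g) = some 1 := by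
      rw [hu'rng] at hmul3
      have e := 𝒢.convProd_eq_some b b' hg2 hh2' hmul3
        (fun g' k' y' z' e1 e2 e3 => 𝒢.uniq_right Bb' hh2' e2 hmul3 e3)
      rw [hone2] at e
      exact e
    exact ⟨⟨g, ⟨𝒢.inv g, hinvdom, 𝒢.inv_inv g⟩, 𝒢.src g,
        ⟨𝒢.src_mem g, hbb⟩, 𝒢.mul_src_self g⟩,
      ⟨𝒢.rng g, ⟨𝒢.rng_mem g, hbb2⟩, g, ⟨𝒢.inv g, hinvdom, 𝒢.inv_inv g⟩,
        𝒢.mul_rng_self g⟩⟩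
  · intro hsub
    -- key pointwise facts
    have key : ∀ g, (a g).isSome → ∃ yb zb : Y, b' (𝒢.inv g) = some yb ∧
        b g = some zb ∧ yb * zb = 1 ∧ zb * yb = 1 := by
      intro g hg
      obtain ⟨hmem1, hmem2⟩ := hsub hg
      obtain ⟨p, ⟨j, hj, hpj⟩, w, ⟨hwU, hw1⟩, hmulpw⟩ := hmem1
      obtain ⟨hgp, hws⟩ := 𝒢.mul_unit hwU hmulpw
      have hwg : w = 𝒢.src g := by rw [hws, hgp]
      have hginv : 𝒢.inv g ∈ pdom b' := by rw [hgp, ← hpj, 𝒢.inv_inv]; exact hj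
      obtain ⟨h0, k0, yh, zk, hh0, hk0, hmul0, hval0⟩ := 𝒢.convProd_elim hw1
      have hh0inv : h0 = 𝒢.inv g := Bb' h0 (by simp [pdom, hh0]) (𝒢.inv g) hginv
        (Or.inr (by
          rw [𝒢.rng_inv, ← hwg, ← 𝒢.rng_unit hwU]
          exact (𝒢.rng_of_mul hmul0).symm))
      have hk0g : k0 = g := by
        have e := 𝒢.inv_mul_cancel hmul0
        rw [hh0inv, 𝒢.inv_inv, hwg, 𝒢.mul_src_self] at e
        exact (Option.some_injective _ e).symm
      rw [hh0inv] at hh0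
      rw [hk0g] at hk0
      -- second membership
      obtain ⟨w', ⟨hw'U, hw'1⟩, p', ⟨j', hj', hpj'⟩, hmul'⟩ := hmem2
      obtain ⟨hgp', hw'r⟩ := 𝒢.unit_mul hw'U hmul'
      have hw'g : w' = 𝒢.rng g := by rw [hw'r, hgp']
      obtain ⟨k1, h1', z1, y1, hk1, hh1', hmul1, hval1⟩ := 𝒢.convProd_elim hw'1
      have hh1inv : h1' = 𝒢.inv g := Bb' h1' (by simp [pdom, hh1']) (𝒢.inv g) hginv
        (Or.inl (by
          rw [𝒢.src_inv, ← 𝒢.src_unit (𝒢.rng_mem g), ← hw'g]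
          exact (𝒢.src_of_mul hmul1).symm))
      have hk1g : k1 = g := by
        have e := 𝒢.mul_inv_cancel hmul1
        rw [hh1inv, 𝒢.inv_inv, hw'g, 𝒢.mul_rng_self] at e
        exact (Option.some_injective _ e).symm
      rw [hh1inv] at hh1'
      rw [hk1g] at hk1
      have hy1 : y1 = yh := by rw [hh0] at hh1'; exact (Option.some_injective _ hh1').symm
      have hz1 : z1 = zk := by rw [hk0] at hk1; exact (Option.some_injective _ hk1).symm
      refine ⟨yh, zk, hh0, hk0, hval0.symm, ?_⟩
      rw [← hy1, ← hz1]
      exact hval1.symm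
    -- every element of dom (a b') is rng g for g in dom a
    have hab'dom : ∀ x (v : Y), 𝒢.convProd a b' x = some v →
        ∃ g, ∃ ya yb : Y, a g = some ya ∧ b' (𝒢.inv g) = some yb ∧
          x = 𝒢.rng g ∧ v = ya * yb := by
      intro x v hx
      obtain ⟨g, h, ya, yb', hga, hhb', hm, hv⟩ := 𝒢.convProd_elim hx
      obtain ⟨yb, zb, hyb, hzb, _, _⟩ := key g (Option.isSome_iff_exists.mpr ⟨_, hga⟩)
      have hhinv : h = 𝒢.inv g := Bb' h (by simp [pdom, hhb']) (𝒢.inv g)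
        (by simp [pdom, hyb]) (Or.inr (by
          rw [𝒢.rng_inv]
          exact (𝒢.src_eq_rng_of_mul hm).symm))
      rw [hhinv] at hm hhb'
      rw [𝒢.rng_spec] at hm
      have hyb' : yb' = yb := by rw [hyb] at hhb'; exact (Option.some_injective _ hhb').symm
      exact ⟨g, ya, yb, hga, hyb, (Option.some_injective _ hm).symm, by rw [hv, hyb']⟩
    -- every element of dom (b' a) is a unit
    have hb'adom : ∀ x (v : Y), 𝒢.convProd b' a x = some v → x ∈ 𝒢.unitSpace := by
      intro x v hx
      obtain ⟨h, m, yv, zv, hhb', hma, hm, _⟩ := 𝒢.convProd_elim hx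
      obtain ⟨yb, zb, hyb, hzb, _, _⟩ := key m (Option.isSome_iff_exists.mpr ⟨_, hma⟩)
      have hhinv : h = 𝒢.inv m := Bb' h (by simp [pdom, hhb']) (𝒢.inv m)
        (by simp [pdom, hyb]) (Or.inl (by
          rw [𝒢.src_inv]
          exact 𝒢.src_eq_rng_of_mul hm))
      rw [hhinv, 𝒢.src_spec] at hm
      rw [← Option.some_injective _ hm]
      exact 𝒢.src_mem m
    refine ⟨?_, ?_, ?_, ?_⟩
    · -- (a b') b = a
      funext x
      cases hax : a x with
      | some y =>
        obtain ⟨yb, zb, hyb, hzb, hone1, hone2⟩ :=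
          key x (Option.isSome_iff_exists.mpr ⟨_, hax⟩)
        have hstep1 : 𝒢.convProd a b' (𝒢.rng x) = some (y * yb) :=
          𝒢.convProd_eq_some a b' hax hyb (𝒢.rng_spec x)
            (fun g' k' y' z' e1 e2 e3 => 𝒢.uniq_left Ba hax e1 (𝒢.rng_spec x) e3)
        have hstep2 : 𝒢.convProd (𝒢.convProd a b') b x = some ((y * yb) * zb) :=
          𝒢.convProd_eq_some _ b hstep1 hzb (𝒢.mul_rng_self x)
            (fun u' k' y' z' e1 e2 e3 => 𝒢.uniq_right Bb hzb e2 (𝒢.mul_rng_self x) e3)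
        rw [hstep2, mul_assoc, hone1, mul_one]
      | none =>
        apply 𝒢.convProd_none
        intro u k yv zv e1 e2 e3
        obtain ⟨g, ya, yb, hga, hgb, hurfl, _⟩ := hab'dom u yv e1
        have huU : u ∈ 𝒢.unitSpace := by rw [hurfl]; exact 𝒢.rng_mem g
        obtain ⟨hxk, hu⟩ := 𝒢.unit_mul huU e3
        obtain ⟨_, zb, _, hbg, _, _⟩ := key g (Option.isSome_iff_exists.mpr ⟨_, hga⟩)
        have hkg : k = g := Bb k (by simp [pdom, e2]) g (by simp [pdom, hbg])
          (Or.inr (by rw [← hu, hurfl]))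
        rw [hxk, hkg, hga] at hax
        exact Option.some_ne_none _ hax
    · -- (b b') a = a
      funext x
      cases hax : a x with
      | some y =>
        obtain ⟨yb, zb, hyb, hzb, hone1, hone2⟩ :=
          key x (Option.isSome_iff_exists.mpr ⟨_, hax⟩)
        have hstep1 : 𝒢.convProd b b' (𝒢.rng x) = some (zb * yb) :=
          𝒢.convProd_eq_some b b' hzb hyb (𝒢.rng_spec x)
            (fun g' k' y' z' e1 e2 e3 => 𝒢.uniq_right Bb' hyb e2 (𝒢.rng_spec x) e3)
        have hstep2 : 𝒢.convProd (𝒢.convProd b b') a x = some ((zb * yb) * y) :=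
          𝒢.convProd_eq_some _ a hstep1 hax (𝒢.mul_rng_self x)
            (fun u' k' y' z' e1 e2 e3 => 𝒢.uniq_right Ba hax e2 (𝒢.mul_rng_self x) e3)
        rw [hstep2, hone2, one_mul]
      | none =>
        apply 𝒢.convProd_none
        intro u m yv zv e1 e2 e3
        obtain ⟨k, h, z1, y1, hk, hh, hm⟩ := 𝒢.convProd_dom_elim
          (show u ∈ pdom (𝒢.convProd b b') from by simp [pdom, e1])
        obtain ⟨ybm, zbm, hybm, hzbm, _, _⟩ := key m (Option.isSome_iff_exists.mpr ⟨_, e2⟩)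
        have hhinv : h = 𝒢.inv m := Bb' h (by simp [pdom, hh]) (𝒢.inv m)
          (by simp [pdom, hybm]) (Or.inl (by
            rw [𝒢.src_inv, ← 𝒢.src_eq_rng_of_mul e3]
            exact (𝒢.src_of_mul hm).symm))
        have hkm : k = m := Bb k (by simp [pdom, hk]) m (by simp [pdom, hzbm])
          (Or.inl (by rw [𝒢.src_eq_rng_of_mul hm, hhinv, 𝒢.rng_inv]))
        have hu : u = 𝒢.rng m := by
          rw [hkm, hhinv, 𝒢.rng_spec] at hm
          exact (Option.some_injective _ hm).symm
        have huU : u ∈ 𝒢.unitSpace := by rw [hu]; exact 𝒢.rng_mem m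
        obtain ⟨hxm, _⟩ := 𝒢.unit_mul huU e3
        rw [hxm, e2] at hax
        exact Option.some_ne_none _ hax
    · -- a b' ∈ D
      rw [hDdef]
      refine ⟨hSmul a ha b' hb', ?_⟩
      intro x hx
      obtain ⟨v, hv⟩ := Option.isSome_iff_exists.mp hx
      obtain ⟨g, ya, yb, _, _, hxr, _⟩ := hab'dom x v hv
      rw [hxr]
      exact 𝒢.rng_mem g
    · -- b' a ∈ D
      rw [hDdef]
      refine ⟨hSmul b' hb' a ha, ?_⟩
      intro x hx
      obtain ⟨v, hv⟩ := Option.isSome_iff_exists.mp hx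
      exact hb'adom x v hv
end

section
/- Let G be a topological groupoid with Hausdorff unit space admitting a bumpy semigroup S of Y-valued functions on open bisections. Then the sets {dom(a) : a ∈ S} form a basis of open bisections for the topology of G, and the inversion map g ↦ g⁻¹ is an open map. -/
/-- the domains of a bumpy semigroup form a basis of open
bisections and inversion is an open map. -/
theorem stmt17 {G Y : Type*} [TopologicalSpace G] [Monoid Y] (𝒢 : Gpd G)
    (hT2 : T2Space 𝒢.unitSpace) (hY : OneCancellative Y)
    (S : Set (G → Option Y)) (hS : 𝒢.IsBumpy S) :
    TopologicalSpace.IsTopologicalBasis {O : Set G | ∃ a ∈ S, pdom a = O} ∧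
    (∀ a ∈ S, IsOpen (pdom a) ∧ 𝒢.IsBisection (pdom a)) ∧
    IsOpenMap 𝒢.inv := by
  have hsub : ∀ a : G → Option Y, unitsPre a ⊆ pdom a := by
    rintro a g ⟨y, hy, -⟩; simp [pdom, hy]
  refine ⟨?_, fun a ha => ⟨hS.domOpen a ha, hS.domBisection a ha⟩, ?_⟩
  · refine TopologicalSpace.isTopologicalBasis_of_isOpen_of_nhds ?_ ?_
    · rintro u ⟨a, ha, rfl⟩; exact hS.domOpen a ha
    · intro g u hg hu
      obtain ⟨a, ha, hsubU, hmem⟩ := hS.urysohn u hu g hg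
      exact ⟨pdom a, ⟨a, ha, rfl⟩, hsub a (interior_subset hmem), hsubU⟩
  · intro U hU
    rw [isOpen_iff_forall_mem_open]
    rintro h ⟨g, hg, rfl⟩
    obtain ⟨a, ha, hsubU, hmem⟩ := hS.urysohn U hU g hg
    obtain ⟨b, hb, hmem'⟩ := hS.involutive a ha g hmem
    refine ⟨interior {h | ∃ y z, a (𝒢.inv h) = some y ∧ b h = some z ∧
      y * z = 1 ∧ z * y = 1}, ?_, isOpen_interior, hmem'⟩
    intro k hk
    obtain ⟨y, z, hy, -⟩ := interior_subset hk
    exact ⟨𝒢.inv k, hsubU (by simp [pdom, hy]), 𝒢.inv_inv k⟩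
end
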